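/- Let H be a closed m-shift system for f, and let W be a set which locally divides H and which contains every minimal set of f that is contained in the core Z_0(H). Then there exists ζ ∈ ℕ such that for every x ∈ X with f^j(x) ∈ C(H) for all 0 ≤ j ≤ ζ−1, one has f^{ζ−1}(x) ∈ W. -/

import Mathlib

open Dynamics

/-- Discrete uniformity on `Fin m`, compatible with its discrete topology. -/
instance (m : ℕ) : UniformSpace (Fin m) := ⊥

/-- The one-sided shift map on `Σ_m = {1,…,m}^ℕ`, modelled as `ℕ → Fin m`. -/
def shiftMap (m : ℕ) : (ℕ → Fin m) → (ℕ → Fin m) := fun a n => a (n + 1)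

variable {X : Type*}

/-- `H = (H_1, …, H_m)` is an `m`-shift system for `f`: each `H i` is nonempty and
`f(H_i) ⊇ H_1 ∪ ⋯ ∪ H_m` for every `i`. -/
def IsShiftSystem (f : X → X) {m : ℕ} (H : Fin m → Set X) : Prop :=
  (∀ i, (H i).Nonempty) ∧ ∀ i, (⋃ j, H j) ⊆ f '' H i

/-- A closed `m`-shift system: an `m`-shift system all of whose sets are closed. -/
def IsClosedShiftSystem [TopologicalSpace X] (f : X → X) {m : ℕ} (H : Fin m → Set X) : Prop :=
  IsShiftSystem f H ∧ ∀ i, IsClosed (H i)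

/-- The itinerary set `It(x)` of a point `x`. -/
def itin (f : X → X) {m : ℕ} (H : Fin m → Set X) (x : X) : Set (ℕ → Fin m) :=
  {a | ∀ i : ℕ, f^[i] x ∈ H (a i)}

/-- The itinerary set `It(S) = ⋃_{x ∈ S} It(x)` of a subset `S ⊆ X`. -/
def itinSet (f : X → X) {m : ℕ} (H : Fin m → Set X) (S : Set X) : Set (ℕ → Fin m) :=
  ⋃ x ∈ S, itin f H x

/-- The `n`-itinerary set `It_n(x)` of a point `x`. -/
def itinN (f : X → X) {m : ℕ} (H : Fin m → Set X) (n : ℕ) (x : X) : Set (Fin n → Fin m) :=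
  {w | ∀ i : Fin n, f^[(i : ℕ)] x ∈ H (w i)}

/-- `A(n)`: the set of initial subwords of length `n` of elements of `A ⊆ Σ_m`. -/
def initWords {m : ℕ} (A : Set (ℕ → Fin m)) (n : ℕ) : Set (Fin n → Fin m) :=
  (fun (a : ℕ → Fin m) (i : Fin n) => a (i : ℕ)) '' A

/-- `π(w) = ⋂_{i<n} f^{-i}(H_{w_i})` for a finite word `w`. -/
def piWord (f : X → X) {m n : ℕ} (H : Fin m → Set X) (w : Fin n → Fin m) : Set X :=
  ⋂ i : Fin n, f^[(i : ℕ)] ⁻¹' H (w i)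

/-- `π(α) = ⋂_{i≥0} f^{-i}(H_{α_i})` for a sequence `α ∈ Σ_m`. -/
def piSeq (f : X → X) {m : ℕ} (H : Fin m → Set X) (α : ℕ → Fin m) : Set X :=
  ⋂ i : ℕ, f^[i] ⁻¹' H (α i)

/-- `π(A) = ⋃_{w ∈ A} π(w)` for a set `A` of `n`-words. -/
def piWordSet (f : X → X) {m n : ℕ} (H : Fin m → Set X) (A : Set (Fin n → Fin m)) : Set X :=
  ⋃ w ∈ A, piWord f H w

/-- `π(A) = ⋃_{α ∈ A} π(α)` for a set `A ⊆ Σ_m` of sequences. -/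
def piSeqSet (f : X → X) {m : ℕ} (H : Fin m → Set X) (A : Set (ℕ → Fin m)) : Set X :=
  ⋃ α ∈ A, piSeq f H α

/-- The center `C(H) = ⋂ i, H i`. -/
def centerSet {m : ℕ} (H : Fin m → Set X) : Set X := ⋂ i, H i

/-- The core `Z_0(H) = ⋂_{k≥0} f^{-k}(C(H))`. -/
def coreSet (f : X → X) {m : ℕ} (H : Fin m → Set X) : Set X :=
  ⋂ k : ℕ, f^[k] ⁻¹' centerSet H

/-- The domain `D(H) = ⋂_{k≥0} f^{-k}(ℍ)` where `ℍ = H_1 ∪ ⋯ ∪ H_m`. -/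
def domainSet (f : X → X) {m : ℕ} (H : Fin m → Set X) : Set X :=
  ⋂ k : ℕ, f^[k] ⁻¹' (⋃ j, H j)

/-- The kernel `Ker(H)`: points lying in at least two of the sets `H i`. -/
def kernelSet {m : ℕ} (H : Fin m → Set X) : Set X :=
  {x | ∃ i j, i ≠ j ∧ x ∈ H i ∧ x ∈ H j}

/-- The kernel of `H` is eventually countable: some image `f^j(Ker(H))` is countable. -/
def EventuallyCountableKernel (f : X → X) {m : ℕ} (H : Fin m → Set X) : Prop :=
  ∃ j : ℕ, (f^[j] '' kernelSet H).Countable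

/-- `H` is nontrivial: `H_i \ Z_0(H) ≠ ∅` for every `i`. -/
def IsNontrivialShiftSystem (f : X → X) {m : ℕ} (H : Fin m → Set X) : Prop :=
  ∀ i, (H i \ coreSet f H).Nonempty

/-- A minimal set of `f`: a nonempty closed invariant set with no proper nonempty closed
invariant subset. -/
def IsMinimalSet [TopologicalSpace X] (f : X → X) (M : Set X) : Prop :=
  M.Nonempty ∧ IsClosed M ∧ f '' M ⊆ M ∧
    ∀ M' : Set X, M' ⊆ M → M'.Nonempty → IsClosed M' → f '' M' ⊆ M' → M' = M

/-- A shift-minimal subset of `Σ_m`. -/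
def IsShiftMinimal {m : ℕ} (Γ : Set (ℕ → Fin m)) : Prop :=
  Γ.Nonempty ∧ IsClosed Γ ∧ shiftMap m '' Γ ⊆ Γ ∧
    ∀ Γ' : Set (ℕ → Fin m), Γ' ⊆ Γ → Γ'.Nonempty → IsClosed Γ' →
      shiftMap m '' Γ' ⊆ Γ' → Γ' = Γ

/-- A periodic orbit of `f`. -/
def IsPeriodicOrbit (f : X → X) (P : Set X) : Prop :=
  ∃ (x : X) (n : ℕ), 0 < n ∧ f^[n] x = x ∧ P = Set.range fun i => f^[i] x

/-- The virtual entropy `ĥ(S)`: the topological entropy of the shift restricted to `It(S)`. -/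
noncomputable def virtualEntropy (f : X → X) {m : ℕ} (H : Fin m → Set X) (S : Set X) : EReal :=
  coverEntropy (shiftMap m) (itinSet f H S)

/-- `W` locally divides the shift system `H`. -/
def LocallyDivides [TopologicalSpace X] (f : X → X) {m : ℕ} (H : Fin m → Set X)
    (W : Set X) : Prop :=
  f '' W ⊆ W ∧ (∀ i, (H i \ W).Nonempty) ∧
    ∃ Λ : Set (ℕ → Fin m), IsClosed Λ ∧ shiftMap m '' Λ ⊆ Λ ∧
      coverEntropy (shiftMap m) Λ < (Real.log m : EReal) ∧
      ∃ V ∈ nhdsSet W, ∀ (x : X) (n : ℕ), 1 ≤ n →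
        (∀ i < n, f^[i] x ∈ V \ W) → itinN f H n x ⊆ initWords Λ n

/-- The ω-limit set of `x` under `f`. -/
def omegaLimitSet [TopologicalSpace X] (f : X → X) (x : X) : Set X :=
  ⋂ N : ℕ, closure (Set.range fun n : ℕ => f^[N + n] x)

/-- `limsup` of a sequence of sets: `⋂_{k≥1} ⋃_{i≥k} A_i`. -/
def limsupSets {β : Type*} (A : ℕ → Set β) : Set β :=
  ⋂ k : ℕ, ⋃ i : ℕ, ⋃ _ : k ≤ i, A i

/-!
A closed subshift `Λ` with `h(Λ) < log m` is not the full shift, so it misses some word of some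
length `n`; since every word is an itinerary of an orbit segment in the center, such a segment of
length `n` cannot stay in `V \ W`. On the other hand, the orbit closure of a point of the core
contains a minimal set, which lies in `W ⊆ interior V`, so the orbit eventually spends `n`
consecutive steps in `interior V`; by compactness this happens within a time `N` that is uniform
over all long enough center orbit segments. As `W` is forward invariant, a segment ending outside
`W` never meets `W`, and `ζ = N + n` works.
-/

open Set Filter Topology

section FullShift

open scoped ENNReal Uniformity

variable {m : ℕ}

lemma shiftMap_iterate_apply (k : ℕ) (a : ℕ → Fin m) (n : ℕ) :
    (shiftMap m)^[k] a n = a (n + k) := by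
  induction k generalizing a with
  | zero => rfl
  | succ k ih => rw [Function.iterate_succ_apply, ih]; simp only [shiftMap]; ring_nf

def headEntourage (m : ℕ) : SetRel (ℕ → Fin m) (ℕ → Fin m) := {p | p.1 0 = p.2 0}

lemma headEntourage_mem_uniformity : headEntourage m ∈ 𝓤 (ℕ → Fin m) := by
  rw [Pi.uniformity]
  refine mem_iInf_of_mem 0 (Filter.mem_comap.2 ⟨SetRel.id, ?_, fun p hp => hp⟩)
  rw [show 𝓤 (Fin m) = 𝓟 SetRel.id from bot_uniformity]
  exact mem_principal_self _

lemma pow_le_coverMincard_headEntourage (hm : 0 < m) (n : ℕ) :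
    ((m ^ n : ℕ) : ℕ∞) ≤ coverMincard (shiftMap m) univ (headEntourage m) n := by
  classical
  refine le_iInf₂ fun s hs => ?_
  -- a dynamical `n`-ball of `headEntourage` fixes the first `n` symbols
  have hsurj : SurjOn (fun (c : ℕ → Fin m) (i : Fin n) => c i) s
      ((Finset.univ : Finset (Fin n → Fin m)) : Set _) := by
    intro w _
    obtain ⟨c, hc, hwc⟩ := hs (mem_univ fun i => if h : i < n then w ⟨i, h⟩ else ⟨0, hm⟩)
    refine ⟨c, hc, funext fun i => ?_⟩
    have := (mem_ball_dynEntourage.1 hwc) i i.2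
    simp_all [UniformSpace.ball, headEntourage, shiftMap_iterate_apply]
  exact_mod_cast by simpa using Finset.card_le_card_of_surjOn _ hsurj

lemma log_le_coverEntropy_univ (hm : 1 ≤ m) :
    (Real.log m : EReal) ≤ coverEntropy (shiftMap m) univ := by
  refine le_trans ?_ (coverEntropyEntourage_le_coverEntropy _ _ headEntourage_mem_uniformity)
  calc (Real.log m : EReal) = ENNReal.log (m : ℝ≥0∞) := by
        rw [ENNReal.log_pos_real' (by exact_mod_cast hm)]; simp
    _ = ExpGrowth.expGrowthSup fun n => (m : ℝ≥0∞) ^ n := ExpGrowth.expGrowthSup_pow.symm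
    _ ≤ _ := ExpGrowth.expGrowthSup_monotone fun n => by
        simpa using ENat.toENNReal_mono (pow_le_coverMincard_headEntourage hm n)

lemma eq_univ_of_forall_initWords_eq_univ {L : Set (ℕ → Fin m)} (hL : IsClosed L)
    (h : ∀ n, initWords L (n + 1) = univ) : L = univ := by
  refine eq_univ_of_forall fun α => ?_
  have hprefix : ∀ n, ∃ a ∈ L, ∀ i < n + 1, a i = α i := fun n => by
    obtain ⟨a, ha, hα⟩ := (h n).symm ▸ mem_univ (fun i : Fin (n + 1) => α i)
    exact ⟨a, ha, fun i hi => congrFun hα ⟨i, hi⟩⟩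
  choose a ha hα using hprefix
  have hlim : Tendsto a atTop (𝓝 α) := tendsto_pi_nhds.2 fun i =>
    tendsto_const_nhds.congr' <| (eventually_ge_atTop i).mono fun n hn => (hα n i (by omega)).symm
  exact hL.mem_of_tendsto hlim (Eventually.of_forall ha)

lemma exists_notMem_initWords_of_coverEntropy_lt (hm : 1 ≤ m) {L : Set (ℕ → Fin m)}
    (hL : IsClosed L) (hent : coverEntropy (shiftMap m) L < Real.log m) :
    ∃ n, 1 ≤ n ∧ ∃ w, w ∉ initWords L n := by
  by_contra! h
  have hL_univ : L = univ := eq_univ_of_forall_initWords_eq_univ hL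
    fun n => eq_univ_of_forall (h (n + 1) (by omega))
  exact (log_le_coverEntropy_univ hm).not_gt (hL_univ ▸ hent)

end FullShift

section MinimalSets

variable {X : Type*} [TopologicalSpace X] [CompactSpace X] {f : X → X}

lemma exists_isMinimalSet_subset {K : Set X} (hKne : K.Nonempty) (hKc : IsClosed K)
    (hKf : MapsTo f K K) : ∃ M ⊆ K, IsMinimalSet f M := by
  let S : Set (Set X) := {A | A ⊆ K ∧ A.Nonempty ∧ IsClosed A ∧ MapsTo f A A}
  have hchain : ∀ c ⊆ S, IsChain (· ⊆ ·) c → c.Nonempty → ∃ lb ∈ S, ∀ s ∈ c, lb ⊆ s := by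
    intro c hcS hc ⟨A, hA⟩
    have : Nonempty c := ⟨⟨A, hA⟩⟩
    refine ⟨⋂₀ c, ⟨(sInter_subset_of_mem hA).trans (hcS hA).1, ?_, ?_, ?_⟩,
      fun s hs => sInter_subset_of_mem hs⟩
    · exact IsCompact.nonempty_sInter_of_directed_nonempty_isCompact_isClosed
        (fun U hU V hV => (hc.total hU hV).elim (fun h => ⟨U, hU, subset_rfl, h⟩)
          fun h => ⟨V, hV, h, subset_rfl⟩)
        (fun U hU => (hcS hU).2.1) (fun U hU => (hcS hU).2.2.1.isCompact)
        (fun U hU => (hcS hU).2.2.1)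
    · exact isClosed_sInter fun U hU => (hcS hU).2.2.1
    · exact fun x hx => mem_sInter.2 fun U hU => (hcS hU).2.2.2 (mem_sInter.1 hx U hU)
  obtain ⟨M, -, ⟨hMK, hMne, hMc, hMf⟩, hMmin⟩ :=
    zorn_superset_nonempty S hchain K ⟨subset_rfl, hKne, hKc, hKf⟩
  refine ⟨M, hMK, hMne, hMc, mapsTo_iff_image_subset.1 hMf, fun M' hM'M hM'ne hM'c hM'f => ?_⟩
  exact subset_antisymm hM'M
    (hMmin ⟨hM'M.trans hMK, hM'ne, hM'c, mapsTo_iff_image_subset.2 hM'f⟩ hM'M)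

lemma exists_iterate_mem_of_isMinimalSet_inter_nonempty (hf : Continuous f) {K B : Set X}
    (hKc : IsClosed K) (hKf : MapsTo f K K) (hB : IsOpen B)
    (hKB : ∀ M, IsMinimalSet f M → M ⊆ K → (M ∩ B).Nonempty) {z : X} (hz : z ∈ K) :
    ∃ t, f^[t] z ∈ B := by
  set O := closure (range fun t => f^[t] z)
  have hOf : MapsTo f O O := by
    refine MapsTo.closure (fun _ ⟨t, ht⟩ => ⟨t + 1, ?_⟩) hf
    rw [← ht]
    exact Function.iterate_succ_apply' f t z
  have hOK : O ⊆ K := closure_minimal (range_subset_iff.2 fun t => hKf.iterate t hz) hKc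
  obtain ⟨M, hMO, hM⟩ :=
    exists_isMinimalSet_subset ⟨z, subset_closure (mem_range_self 0)⟩ isClosed_closure hOf
  obtain ⟨y, hyM, hyB⟩ := hKB M hM (hMO.trans hOK)
  obtain ⟨_, hB', t, rfl⟩ := mem_closure_iff.1 (hMO hyM) B hB hyB
  exact ⟨t, hB'⟩

lemma exists_uniform_iterate_mem (hf : Continuous f) {C B : Set X} (hC : IsClosed C)
    (hB : IsOpen B) (h : ∀ z, (∀ k, f^[k] z ∈ C) → ∃ t, f^[t] z ∈ B) :
    ∃ N, ∀ x, (∀ k ≤ N, f^[k] x ∈ C) → ∃ t ≤ N, f^[t] x ∈ B := by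
  by_contra! hA
  choose x hxC hxB using hA
  set A : ℕ → Set X := fun N => ⋂ k ≤ N, f^[k] ⁻¹' (C \ B)
  have hAc : ∀ N, IsClosed (A N) := fun N =>
    isClosed_biInter fun k _ => (hC.sdiff hB).preimage (hf.iterate k)
  obtain ⟨z, hz⟩ := IsCompact.nonempty_iInter_of_sequence_nonempty_isCompact_isClosed A
    (fun N => biInter_subset_biInter_left fun k hk => Nat.le_succ_of_le hk)
    (fun N => ⟨x N, mem_iInter₂.2 fun k hk => ⟨hxC N k hk, hxB N k hk⟩⟩)
    (hAc 0).isCompact hAc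
  have hzA : ∀ k, f^[k] z ∈ C \ B := fun k => mem_iInter₂.1 (mem_iInter.1 hz k) k le_rfl
  obtain ⟨t, ht⟩ := h z fun k => (hzA k).1
  exact (hzA t).2 ht

end MinimalSets

section ShiftSystems

variable {X : Type*} {f : X → X} {m : ℕ} {H : Fin m → Set X}

lemma itinN_eq_univ_of_iterate_mem_centerSet {n : ℕ} {x : X}
    (hx : ∀ i < n, f^[i] x ∈ centerSet H) : itinN f H n x = univ :=
  eq_univ_of_forall fun _ i => mem_iInter.1 (hx i i.2) _

lemma mapsTo_coreSet : MapsTo f (coreSet f H) (coreSet f H) := fun x hx =>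
  mem_iInter.2 fun k => by
    simpa only [mem_preimage, Function.iterate_succ_apply] using mem_iInter.1 hx (k + 1)

variable [TopologicalSpace X]

lemma isClosed_centerSet (hH : ∀ i, IsClosed (H i)) : IsClosed (centerSet H) :=
  isClosed_iInter hH

lemma isClosed_coreSet (hf : Continuous f) (hH : ∀ i, IsClosed (H i)) :
    IsClosed (coreSet f H) :=
  isClosed_iInter fun k => (isClosed_centerSet hH).preimage (hf.iterate k)

/-- Every word is an itinerary of a center orbit segment, whereas a segment staying in `V \ W`
only has itineraries in `Λ(n)`, which misses some word because `h(Λ) < log m`. -/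
lemma LocallyDivides.exists_nhdsSet_centerSet_segment_exits {W : Set X} (hm : 1 ≤ m)
    (h : LocallyDivides f H W) :
    ∃ n, 1 ≤ n ∧ ∃ V ∈ 𝓝ˢ W, ∀ x, (∀ i < n, f^[i] x ∈ centerSet H) →
      ∃ i < n, f^[i] x ∉ V \ W := by
  obtain ⟨-, -, Λ, hΛ, -, hent, V, hV, hΛV⟩ := h
  obtain ⟨n, hn, w, hw⟩ := exists_notMem_initWords_of_coverEntropy_lt hm hΛ hent
  refine ⟨n, hn, V, hV, fun x hx => ?_⟩
  by_contra! hVW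
  exact hw (hΛV x n hn hVW (itinN_eq_univ_of_iterate_mem_centerSet hx ▸ mem_univ w))

end ShiftSystems

/-- If `W` locally divides `H` and contains every minimal set contained in the core, then
there is `ζ ∈ ℕ` such that any orbit segment of length `ζ` contained in the center `C(H)`
terminates in `W`. -/
theorem orbit_in_center_terminates_in_W [MetricSpace X] [CompactSpace X]
    {f : X → X} (hf : Continuous f) {m : ℕ} (hm : 1 ≤ m) {H : Fin m → Set X}
    (hH : IsClosedShiftSystem f H) {W : Set X} (hdiv : LocallyDivides f H W)
    (hmin : ∀ M : Set X, IsMinimalSet f M → M ⊆ coreSet f H → M ⊆ W) :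
    ∃ ζ : ℕ, 0 < ζ ∧ ∀ x : X, (∀ j < ζ, f^[j] x ∈ centerSet H) → f^[ζ - 1] x ∈ W := by
  obtain ⟨n, hn, V, hV, hexit⟩ := hdiv.exists_nhdsSet_centerSet_segment_exits hm
  have hWf : MapsTo f W W := mapsTo_iff_image_subset.2 hdiv.1
  set B := ⋂ i : Fin n, f^[i] ⁻¹' interior V
  have hB : IsOpen B := isOpen_iInter_of_finite fun i => isOpen_interior.preimage (hf.iterate i)
  have hMB : ∀ M, IsMinimalSet f M → M ⊆ coreSet f H → (M ∩ B).Nonempty := by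
    intro M hM hMcore
    obtain ⟨y, hy⟩ := hM.1
    have hMf : MapsTo f M M := mapsTo_iff_image_subset.2 hM.2.2.1
    exact ⟨y, hy, mem_iInter.2 fun i =>
      subset_interior_iff_mem_nhdsSet.2 hV (hmin M hM hMcore (hMf.iterate i hy))⟩
  obtain ⟨N, hN⟩ := exists_uniform_iterate_mem hf (isClosed_centerSet hH.2) hB fun z hz =>
    exists_iterate_mem_of_isMinimalSet_inter_nonempty hf (isClosed_coreSet hf hH.2)
      mapsTo_coreSet hB hMB (mem_iInter.2 hz)
  refine ⟨N + n, by omega, fun x hx => ?_⟩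
  by_contra hxW
  obtain ⟨t, htN, htB⟩ := hN x fun k hk => hx k (by omega)
  obtain ⟨i, hi, hiVW⟩ := hexit (f^[t] x) fun i hi => by
    rw [← Function.iterate_add_apply]; exact hx _ (by omega)
  refine hiVW ⟨interior_subset (mem_iInter.1 htB ⟨i, hi⟩), fun hW => hxW ?_⟩
  have := hWf.iterate (N + n - 1 - (i + t)) hW
  rwa [← Function.iterate_add_apply, ← Function.iterate_add_apply,
    show N + n - 1 - (i + t) + i + t = N + n - 1 by omega] at this
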